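/- Let Ī₁, Ī₂, Ī₃, J₃, m, g, h̄ be positive real constants and χ ∈ ℝ³. Define h : (ℝ³ × ℝ³) × ℝ × ℝ → ℝ by h(Π,Γ,α,l) = (1/2)[Π₁²/Ī₁ + Π₂²/Ī₂ + (Π₃−l)²/Ī₃ + l²/J₃] + m g h̄ ⟨Γ,χ⟩, and set Ω(Π,l) = (Π₁/Ī₁, Π₂/Ī₂, (Π₃−l)/Ī₃). Then, with respect to the bracket {F,K}₋(Π,Γ,α,l) = −⟨Π, ∇_Π F × ∇_Π K⟩ − ⟨Γ, ∇_Π F × ∇_Γ K − ∇_Π K × ∇_Γ F⟩ + (∂F/∂α ∂K/∂l − ∂K/∂α ∂F/∂l), the coordinate functions satisfy: {Π_i, h}₋ = (Π × Ω(Π,l) + m g h̄ (Γ × χ))_i and {Γ_i, h}₋ = (Γ × Ω(Π,l))_i for i = 1,2,3, {α, h}₋ = −(Π₃−l)/Ī₃ + l/J₃, and {l, h}₋ = 0, everywhere on (ℝ³ × ℝ³) × ℝ × ℝ. -/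

import Mathlib

/-!
Bracketing with a coordinate function picks out one block of partial derivatives of the other
argument: `{Π_i, K} = (Π × ∇_Π K + Γ × ∇_Γ K)_i`, `{Γ_i, K} = (Γ × ∇_Π K)_i`, `{α, K} = ∂K/∂l` and
`{l, K} = -∂K/∂α`. For the Hamiltonian `∇_Π h = Ω`, `∇_Γ h = m g h̄ χ`, `∂h/∂l = -(Π₃-l)/Ī₃ + l/J₃`,
and `h` does not depend on `α`.
-/

/-- Euclidean inner product on `ℝ³`. -/
def dot3 (a b : Fin 3 → ℝ) : ℝ := a 0 * b 0 + a 1 * b 1 + a 2 * b 2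

/-- Cross product on `ℝ³`. -/
def cross3 (a b : Fin 3 → ℝ) : Fin 3 → ℝ :=
  ![a 1 * b 2 - a 2 * b 1, a 2 * b 0 - a 0 * b 2, a 0 * b 1 - a 1 * b 0]

/-- The phase space `𝔰𝔢*(3) × ℝ × ℝ ≅ (ℝ³ × ℝ³) × ℝ × ℝ`. -/
abbrev SE3Phase : Type := (Fin 3 → ℝ) × (Fin 3 → ℝ) × ℝ × ℝ

/-- Gradient in the variable `Π`. -/
noncomputable def gradPi (F : SE3Phase → ℝ) (p : SE3Phase) : Fin 3 → ℝ :=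
  fun i => fderiv ℝ (fun P => F (P, p.2.1, p.2.2.1, p.2.2.2)) p.1 (Pi.single i 1)

/-- Gradient in the variable `Γ`. -/
noncomputable def gradGamma (F : SE3Phase → ℝ) (p : SE3Phase) : Fin 3 → ℝ :=
  fun i => fderiv ℝ (fun G => F (p.1, G, p.2.2.1, p.2.2.2)) p.2.1 (Pi.single i 1)

/-- Partial derivative in the variable `α`. -/
noncomputable def dAlpha (F : SE3Phase → ℝ) (p : SE3Phase) : ℝ :=
  deriv (fun a => F (p.1, p.2.1, a, p.2.2.2)) p.2.2.1

/-- Partial derivative in the variable `l`. -/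
noncomputable def dL (F : SE3Phase → ℝ) (p : SE3Phase) : ℝ :=
  deriv (fun l => F (p.1, p.2.1, p.2.2.1, l)) p.2.2.2

/-- The Poisson bracket on `𝔰𝔢*(3) × ℝ × ℝ`: the heavy top Lie–Poisson bracket in `(Π,Γ)`
plus the canonical bracket in `(α,l)`. -/
noncomputable def minusBracket (F K : SE3Phase → ℝ) : SE3Phase → ℝ :=
  fun p => -(dot3 p.1 (cross3 (gradPi F p) (gradPi K p)))
    - dot3 p.2.1 (fun i => cross3 (gradPi F p) (gradGamma K p) i
        - cross3 (gradPi K p) (gradGamma F p) i)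
    + (dAlpha F p * dL K p - dAlpha K p * dL F p)

theorem cross3_smul_right (a b : Fin 3 → ℝ) (c : ℝ) : cross3 a (c • b) = c • cross3 a b := by
  funext i
  fin_cases i <;> simp [cross3] <;> ring

section PartialDerivatives

variable {F : SE3Phase → ℝ}

theorem gradPi_eq_zero (hF : ∀ q P, F (P, q.2.1, q.2.2.1, q.2.2.2) = F q) (p : SE3Phase) :
    gradPi F p = 0 := by
  funext j
  simp [gradPi, hF]

theorem gradGamma_eq_zero (hF : ∀ q G, F (q.1, G, q.2.2.1, q.2.2.2) = F q) (p : SE3Phase) :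
    gradGamma F p = 0 := by
  funext j
  simp [gradGamma, hF]

theorem dAlpha_eq_zero (hF : ∀ q a, F (q.1, q.2.1, a, q.2.2.2) = F q) (p : SE3Phase) :
    dAlpha F p = 0 := by
  simp [dAlpha, hF]

theorem dL_eq_zero (hF : ∀ q l, F (q.1, q.2.1, q.2.2.1, l) = F q) (p : SE3Phase) :
    dL F p = 0 := by
  simp [dL, hF]

theorem gradPi_coord (i : Fin 3) (p : SE3Phase) :
    gradPi (fun q => q.1 i) p = Pi.single i 1 := by
  funext j
  simp (disch := fun_prop) [gradPi, fderiv_apply, Pi.single_apply, eq_comm]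

theorem gradGamma_coord (i : Fin 3) (p : SE3Phase) :
    gradGamma (fun q => q.2.1 i) p = Pi.single i 1 := by
  funext j
  simp (disch := fun_prop) [gradGamma, fderiv_apply, Pi.single_apply, eq_comm]

theorem dAlpha_alpha (p : SE3Phase) : dAlpha (fun q => q.2.2.1) p = 1 := by
  simp [dAlpha]

theorem dL_l (p : SE3Phase) : dL (fun q => q.2.2.2) p = 1 := by
  simp [dL]

end PartialDerivatives

section CoordinateBrackets

variable (K : SE3Phase → ℝ) (p : SE3Phase)

/- The discharger proves that a coordinate function is constant in the remaining variables;
for `K` it fails, so only the partial derivatives of the coordinate function are rewritten. -/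

theorem minusBracket_Pi_coord (i : Fin 3) :
    minusBracket (fun q => q.1 i) K p
      = cross3 p.1 (gradPi K p) i + cross3 p.2.1 (gradGamma K p) i := by
  simp (disch := exact fun _ _ => rfl) only
    [minusBracket, gradPi_coord, gradGamma_eq_zero, dAlpha_eq_zero, dL_eq_zero]
  fin_cases i <;> simp [dot3, cross3] <;> ring

theorem minusBracket_Gamma_coord (i : Fin 3) :
    minusBracket (fun q => q.2.1 i) K p = cross3 p.2.1 (gradPi K p) i := by
  simp (disch := exact fun _ _ => rfl) only
    [minusBracket, gradGamma_coord, gradPi_eq_zero, dAlpha_eq_zero, dL_eq_zero]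
  fin_cases i <;> simp [dot3, cross3] <;> ring

theorem minusBracket_alpha : minusBracket (fun q => q.2.2.1) K p = dL K p := by
  simp (disch := exact fun _ _ => rfl)
    [minusBracket, dAlpha_alpha, gradPi_eq_zero, gradGamma_eq_zero, dL_eq_zero, dot3, cross3]

theorem minusBracket_l : minusBracket (fun q => q.2.2.2) K p = -dAlpha K p := by
  simp (disch := exact fun _ _ => rfl)
    [minusBracket, dL_l, gradPi_eq_zero, gradGamma_eq_zero, dAlpha_eq_zero, dot3, cross3]

end CoordinateBrackets

section RotorHamiltonian

variable (I1 I2 I3 J3 m g hb : ℝ) (χ : Fin 3 → ℝ)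

noncomputable def rotorHamiltonian : SE3Phase → ℝ :=
  fun p => (1/2) * ((p.1 0)^2 / I1 + (p.1 1)^2 / I2
    + (p.1 2 - p.2.2.2)^2 / I3 + (p.2.2.2)^2 / J3) + m * g * hb * dot3 p.2.1 χ

noncomputable def bodyAngularVelocity : (Fin 3 → ℝ) → ℝ → Fin 3 → ℝ :=
  fun P l => ![P 0 / I1, P 1 / I2, (P 2 - l) / I3]

theorem gradPi_rotorHamiltonian (p : SE3Phase) :
    gradPi (rotorHamiltonian I1 I2 I3 J3 m g hb χ) p
      = bodyAngularVelocity I1 I2 I3 p.1 p.2.2.2 := by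
  funext j
  simp only [gradPi, rotorHamiltonian, bodyAngularVelocity, div_eq_mul_inv]
  fin_cases j <;> simp (disch := fun_prop) [fderiv_fun_add, fderiv_const_mul, fderiv_fun_pow,
    fderiv_mul_const, fderiv_sub_const, fderiv_apply, Pi.single_apply] <;> ring

theorem gradGamma_rotorHamiltonian (p : SE3Phase) :
    gradGamma (rotorHamiltonian I1 I2 I3 J3 m g hb χ) p = (m * g * hb) • χ := by
  funext j
  simp only [gradGamma, rotorHamiltonian, dot3]
  fin_cases j <;> simp (disch := fun_prop) [fderiv_fun_add, fderiv_const_mul,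
    fderiv_mul_const, fderiv_apply, Pi.single_apply]

theorem dAlpha_rotorHamiltonian (p : SE3Phase) :
    dAlpha (rotorHamiltonian I1 I2 I3 J3 m g hb χ) p = 0 :=
  dAlpha_eq_zero (fun _ _ => rfl) p

theorem dL_rotorHamiltonian (p : SE3Phase) :
    dL (rotorHamiltonian I1 I2 I3 J3 m g hb χ) p = -(p.1 2 - p.2.2.2) / I3 + p.2.2.2 / J3 := by
  simp (disch := fun_prop) [dL, rotorHamiltonian, div_eq_mul_inv]
  ring

end RotorHamiltonian

theorem spacecraft_rotor_reduced_equations_noncoincident_general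
    (I1 I2 I3 J3 m g hb : ℝ)
    (χ : Fin 3 → ℝ)
    (h : SE3Phase → ℝ)
    (hh : h = fun p => (1/2) * ((p.1 0)^2 / I1 + (p.1 1)^2 / I2
      + (p.1 2 - p.2.2.2)^2 / I3 + (p.2.2.2)^2 / J3) + m * g * hb * dot3 p.2.1 χ)
    (Ω : (Fin 3 → ℝ) → ℝ → Fin 3 → ℝ)
    (hΩ : Ω = fun P l => ![P 0 / I1, P 1 / I2, (P 2 - l) / I3]) :
    (∀ i : Fin 3, ∀ p : SE3Phase,
      minusBracket (fun q => q.1 i) h p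
        = cross3 p.1 (Ω p.1 p.2.2.2) i + m * g * hb * cross3 p.2.1 χ i) ∧
    (∀ i : Fin 3, ∀ p : SE3Phase,
      minusBracket (fun q => q.2.1 i) h p = cross3 p.2.1 (Ω p.1 p.2.2.2) i) ∧
    (∀ p : SE3Phase,
      minusBracket (fun q => q.2.2.1) h p = -(p.1 2 - p.2.2.2) / I3 + p.2.2.2 / J3) ∧
    (∀ p : SE3Phase,
      minusBracket (fun q => q.2.2.2) h p = 0) := by
  obtain rfl : h = rotorHamiltonian I1 I2 I3 J3 m g hb χ := hh
  obtain rfl : Ω = bodyAngularVelocity I1 I2 I3 := hΩ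
  refine ⟨fun i p => ?_, fun i p => ?_, fun p => ?_, fun p => ?_⟩
  · rw [minusBracket_Pi_coord, gradPi_rotorHamiltonian, gradGamma_rotorHamiltonian,
      cross3_smul_right, Pi.smul_apply, smul_eq_mul]
  · rw [minusBracket_Gamma_coord, gradPi_rotorHamiltonian]
  · rw [minusBracket_alpha, dL_rotorHamiltonian]
  · rw [minusBracket_l, dAlpha_rotorHamiltonian, neg_zero]

/-- The Poisson brackets of the coordinate functions with the reduced Hamiltonian of the
spacecraft-rotor system with non-coincident centers: `{Π_i,h}₋ = (Π × Ω + m g h̄ (Γ × χ))_i`,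
`{Γ_i,h}₋ = (Γ × Ω)_i`, `{α,h}₋ = −(Π₃−l)/Ī₃ + l/J₃` and `{l,h}₋ = 0`. -/
theorem spacecraft_rotor_reduced_equations_noncoincident
    (I1 I2 I3 J3 m g hb : ℝ)
    (hI1 : 0 < I1) (hI2 : 0 < I2) (hI3 : 0 < I3) (hJ3 : 0 < J3)
    (hm : 0 < m) (hg : 0 < g) (hhb : 0 < hb) (χ : Fin 3 → ℝ)
    (h : SE3Phase → ℝ)
    (hh : h = fun p => (1/2) * ((p.1 0)^2 / I1 + (p.1 1)^2 / I2
      + (p.1 2 - p.2.2.2)^2 / I3 + (p.2.2.2)^2 / J3) + m * g * hb * dot3 p.2.1 χ)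
    (Ω : (Fin 3 → ℝ) → ℝ → Fin 3 → ℝ)
    (hΩ : Ω = fun P l => ![P 0 / I1, P 1 / I2, (P 2 - l) / I3]) :
    (∀ i : Fin 3, ∀ p : SE3Phase,
      minusBracket (fun q => q.1 i) h p
        = cross3 p.1 (Ω p.1 p.2.2.2) i + m * g * hb * cross3 p.2.1 χ i) ∧
    (∀ i : Fin 3, ∀ p : SE3Phase,
      minusBracket (fun q => q.2.1 i) h p = cross3 p.2.1 (Ω p.1 p.2.2.2) i) ∧
    (∀ p : SE3Phase,
      minusBracket (fun q => q.2.2.1) h p = -(p.1 2 - p.2.2.2) / I3 + p.2.2.2 / J3) ∧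
    (∀ p : SE3Phase,
      minusBracket (fun q => q.2.2.2) h p = 0) :=
  spacecraft_rotor_reduced_equations_noncoincident_general I1 I2 I3 J3 m g hb χ h hh Ω hΩ
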